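/- arXiv:2004.05230 — 2 statements merged into one kernel-verified Lean document; each statement's English description precedes it below -/
import Mathlib

section
/- Let P be a finite partially ordered set with n elements and k connected components, F a field, and G a finite group. Then the number of distinct elementary G-gradings of the incidence algebra I(P,F), i.e., the cardinality of the set of families { (A^θ(g))_{g ∈ G} : θ : P → G }, equals |G|^{n−k}. -/
/-- `A^θ(g)`: the `F`-subspace of the incidence algebra `I(P,F)` consisting of the functions
`f` with `f x y = 0` whenever `x ≤ y` and `(θ x)⁻¹ * θ y ≠ g`. -/
def elemSubspace (F : Type*) [Field F] {α : Type*} [PartialOrder α] [LocallyFiniteOrder α]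
    {G : Type*} [Group G] (θ : α → G) (g : G) :
    Submodule F (IncidenceAlgebra F α) where
  carrier := {f | ∀ x y : α, x ≤ y → (θ x)⁻¹ * θ y ≠ g → f x y = 0}
  zero_mem' := by intro x y _ _; rfl
  add_mem' := by
    intro f₁ f₂ h₁ h₂ x y hxy hg
    show (f₁ + f₂) x y = 0
    rw [IncidenceAlgebra.add_apply, h₁ x y hxy hg, h₂ x y hxy hg, add_zero]
  smul_mem' := by
    intro c f hf x y hxy hg
    show (c • f) x y = 0
    rw [IncidenceAlgebra.constSMul_apply, hf x y hxy hg, smul_zero]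


section Aux
variable {F α G : Type*} [Field F] [PartialOrder α] [LocallyFiniteOrder α] [Group G]

lemma aux_group_iff (a b c d : G) : a⁻¹ * b = c⁻¹ * d ↔ c * a⁻¹ = d * b⁻¹ := by
  constructor <;> intro h
  · calc c * a⁻¹ = c * (a⁻¹ * b) * b⁻¹ := by group
      _ = c * (c⁻¹ * d) * b⁻¹ := by rw [h]
      _ = d * b⁻¹ := by group
  · calc a⁻¹ * b = c⁻¹ * (c * a⁻¹) * b := by group
      _ = c⁻¹ * (d * b⁻¹) * b := by rw [h]
      _ = c⁻¹ * d := by group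

lemma elemSubspace_eq_iff {θ θ' : α → G} :
    elemSubspace F θ = elemSubspace F θ' ↔
      ∀ x y : α, x ≤ y → (θ x)⁻¹ * θ y = (θ' x)⁻¹ * θ' y := by
  classical
  constructor
  · intro h x y hxy
    by_contra hne
    set f : IncidenceAlgebra F α :=
      ⟨fun a b => if a = x ∧ b = y then 1 else 0, by
        intro a b hab
        split
        · next hh => exact absurd (hh.1 ▸ hh.2 ▸ hxy) hab
        · rfl⟩ with hf
    have hmem : f ∈ elemSubspace F θ ((θ x)⁻¹ * θ y) := by
      intro a b hab hg
      show (if a = x ∧ b = y then (1:F) else 0) = 0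
      split
      · next hh => exact absurd (hh.1 ▸ hh.2 ▸ rfl) hg
      · rfl
    rw [h] at hmem
    have h0 : (if x = x ∧ y = y then (1:F) else 0) = 0 :=
      hmem x y hxy (fun hh => hne hh.symm)
    rw [if_pos ⟨rfl, rfl⟩] at h0
    exact one_ne_zero h0
  · intro h
    funext g
    ext f
    constructor <;> intro hf a b hab hg
    · exact hf a b hab (by rw [h a b hab]; exact hg)
    · exact hf a b hab (by rw [← h a b hab]; exact hg)
end Aux

/-- if `P` is a finite poset with `n` elements and `k` connected components and
`G` is a finite group, then the number of distinct elementary `G`-gradings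
`(A^θ(g))_{g ∈ G}`, for `θ : P → G`, equals `|G| ^ (n - k)`.  The number of connected
components is the cardinality of the quotient of `P` by the equivalence relation generated by
comparability. -/
theorem card_elementary_gradings {F α G : Type*} [Field F] [PartialOrder α] [Fintype α]
    [LocallyFiniteOrder α] [Group G] [Fintype G] :
    Nat.card {A : G → Submodule F (IncidenceAlgebra F α) // ∃ θ : α → G, A = elemSubspace F θ}
      = Fintype.card G ^
        (Fintype.card α - Nat.card (Quot (fun a b : α => a ≤ b ∨ b ≤ a))) := by
  classical
  set r : α → α → Prop := fun a b => a ≤ b ∨ b ≤ a with hr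
  haveI : Finite (Quot r) := Finite.of_surjective (Quot.mk r) Quot.mk_surjective
  let rep : α → α := fun x => (Quot.mk r x).out
  have hrep_mk : ∀ x, Quot.mk r (rep x) = Quot.mk r x := fun x => Quot.out_eq _
  have hrep_rep : ∀ x, rep (rep x) = rep x := fun x => by
    show (Quot.mk r (rep x)).out = rep x
    rw [hrep_mk]
  set Ψ : (α → G) → (α → G) := fun θ x => (θ (rep x))⁻¹ * θ x with hΨ
  set Φ : (α → G) → (G → Submodule F (IncidenceAlgebra F α)) :=
    fun θ => elemSubspace F θ with hΦ
  have hker : ∀ θ θ' : α → G, Φ θ = Φ θ' ↔ Ψ θ = Ψ θ' := by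
    intro θ θ'
    rw [show Φ θ = elemSubspace F θ from rfl, show Φ θ' = elemSubspace F θ' from rfl,
      elemSubspace_eq_iff]
    constructor
    · intro h
      have hc : ∀ x y, r x y → θ' x * (θ x)⁻¹ = θ' y * (θ y)⁻¹ := by
        intro x y hxy
        rcases hxy with hxy | hxy
        · exact (aux_group_iff _ _ _ _).1 (h x y hxy)
        · exact ((aux_group_iff _ _ _ _).1 (h y x hxy)).symm
      have hcl : ∀ x, θ' (rep x) * (θ (rep x))⁻¹ = θ' x * (θ x)⁻¹ := by
        intro x
        have := congrArg (Quot.lift (fun z => θ' z * (θ z)⁻¹) hc) (hrep_mk x)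
        simpa using this
      funext x
      exact (aux_group_iff _ _ _ _).2 (hcl x)
    · intro h x y hxy
      have h1 : ∀ z, θ' (rep z) * (θ (rep z))⁻¹ = θ' z * (θ z)⁻¹ := fun z =>
        (aux_group_iff _ _ _ _).1 (congrFun h z)
      have hxy' : rep x = rep y := by
        show (Quot.mk r x).out = (Quot.mk r y).out
        have hq : Quot.mk r x = Quot.mk r y := Quot.sound (show r x y from Or.inl hxy)
        rw [hq]
      refine (aux_group_iff _ _ _ _).2 ?_
      rw [← h1 x, ← h1 y, hxy']
  have e1 : {A : G → Submodule F (IncidenceAlgebra F α) // ∃ θ : α → G, A = elemSubspace F θ}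
      ≃ Set.range Φ :=
    Equiv.subtypeEquivRight fun A => by
      simp only [Set.mem_range, hΦ]
      exact exists_congr fun θ => eq_comm
  have hkerEq : Setoid.ker Φ = Setoid.ker Ψ := Setoid.ext fun θ θ' => hker θ θ'
  have e2 : Set.range Φ ≃ Set.range Ψ :=
    (Setoid.quotientKerEquivRange Φ).symm.trans
      ((Equiv.cast (by rw [hkerEq])).trans (Setoid.quotientKerEquivRange Ψ))
  set S : Set α := Set.range (Quot.out : Quot r → α) with hS
  have hrangeΨ : Set.range Ψ = {θ : α → G | ∀ y ∈ S, θ y = 1} := by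
    ext θ
    constructor
    · rintro ⟨θ₀, rfl⟩ y ⟨q, rfl⟩
      obtain ⟨a, rfl⟩ := Quot.mk_surjective q
      show (θ₀ (rep (rep a)))⁻¹ * θ₀ (rep a) = 1
      rw [hrep_rep]; group
    · intro h
      refine ⟨θ, funext fun x => ?_⟩
      show (θ (rep x))⁻¹ * θ x = θ x
      rw [h (rep x) ⟨Quot.mk r x, rfl⟩]; group
  have e3 : {θ : α → G // ∀ y ∈ S, θ y = 1} ≃ ((Sᶜ : Set α) → G) :=
    { toFun := fun θ x => θ.1 x
      invFun := fun f => ⟨fun x => if h : x ∈ S then 1 else f ⟨x, h⟩,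
        fun y hy => dif_pos hy⟩
      left_inv := fun θ => Subtype.ext (funext fun x => by
        by_cases h : x ∈ S
        · simp [h, θ.2 x h]
        · simp [h])
      right_inv := fun f => funext fun x => by
        have : ↑x ∉ S := x.2
        simp [this] }
  have hout : Function.Injective (Quot.out : Quot r → α) := fun a b h => by
    rw [← Quot.out_eq a, ← Quot.out_eq b, h]
  have hcardS : S.ncard = Nat.card (Quot r) := by
    rw [← Nat.card_coe_set_eq]
    exact Nat.card_congr (Equiv.ofInjective _ hout).symm
  have hcardSc : (Sᶜ : Set α).ncard = Fintype.card α - Nat.card (Quot r) := by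
    have h1 := S.ncard_add_ncard_compl
    rw [Nat.card_eq_fintype_card] at h1
    omega
  calc Nat.card {A : G → Submodule F (IncidenceAlgebra F α) // ∃ θ : α → G, A = elemSubspace F θ}
      = Nat.card (Set.range Ψ) := Nat.card_congr (e1.trans e2)
    _ = Nat.card {θ : α → G // ∀ y ∈ S, θ y = 1} :=
        Nat.card_congr (Equiv.setCongr hrangeΨ)
    _ = Nat.card ((Sᶜ : Set α) → G) := Nat.card_congr e3
    _ = Nat.card G ^ Nat.card (Sᶜ : Set α) := Nat.card_fun
    _ = Fintype.card G ^ (Sᶜ : Set α).ncard := by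
        rw [Nat.card_eq_fintype_card, Nat.card_coe_set_eq]
    _ = Fintype.card G ^ (Fintype.card α - Nat.card (Quot r)) := by rw [hcardSc]
end

section
/- Let P be a locally finite partially ordered set, F a field, G a group, and θ, μ : P → G functions with G_θ and G_μ finite. Then there exists an F-algebra automorphism φ of the incidence algebra I(P,F) with φ(A^θ(g)) = A^μ(g) for every g ∈ G (i.e., the elementary graded algebras A^θ and A^μ are isomorphic as G-graded algebras) if and only if there exists an order automorphism σ of P such that the function x ↦ μ(x)·θ(σ⁻¹(x))⁻¹ is constant on each connected component of P. -/
/-!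
Write `e_{xy}` for `single x y` and `e_x` for `e_{xx}`. Evaluation on the diagonal at `x` is a
character `diagHom x` of `I(P,F)`, and since `e_x f e_x = f(x,x) e_x`, any character not vanishing
on the idempotent `e_x` is `diagHom x`. An element with zero diagonal is locally nilpotent, so a
nonzero idempotent has a nonzero diagonal entry. Hence for an automorphism `φ` the idempotent
`φ(e_x)` is nonzero at some diagonal entry `σ x`, and then `diagHom (σ x) ∘ φ = diagHom x`; this
pins down `σ x` and makes `σ` a bijection. Pulling the corner `e_{σx} φ(e_{xy}) e_{σy}` back along
`φ` and cutting it down by `e_x`, `e_y` returns `e_{xy}`, so `φ(e_{xy})(σx, σy) ≠ 0`. Thus `σ` is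
an order automorphism, and if `φ` respects the gradings, `μ(σx)⁻¹ μ(σy) = θ(x)⁻¹ θ(y)` for
`x ≤ y`. Conversely, `σ` induces the automorphism `f ↦ f ∘ (σ⁻¹ × σ⁻¹)`, which carries `A^θ(g)`
onto `A^{θ ∘ σ⁻¹}(g)`. Finally, `A^θ(g)` only depends on the values `θ(x)⁻¹ θ(y)` for `x ≤ y`,
and these agree with those of `μ` exactly when `μ · (θ ∘ σ⁻¹)⁻¹` is constant along comparable
pairs, i.e. on connected components.
-/

open Finset

namespace IncidenceAlgebra

variable {𝕜 α : Type*}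

section Single

variable [DecidableEq α]

def single [Zero 𝕜] [One 𝕜] [LE α] (a b : α) (h : a ≤ b) : IncidenceAlgebra 𝕜 α :=
  ⟨fun x y => if x = a ∧ y = b then 1 else 0,
    fun _ _ hxy => if_neg fun ⟨hx, hy⟩ => hxy (hx ▸ hy ▸ h)⟩

lemma single_apply [Zero 𝕜] [One 𝕜] [LE α] {a b : α} (h : a ≤ b) (x y : α) :
    single a b h x y = if x = a ∧ y = b then (1 : 𝕜) else 0 := rfl

lemma single_ne_zero [MulZeroOneClass 𝕜] [Nontrivial 𝕜] [LE α] {a b : α} (h : a ≤ b) :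
    single a b h ≠ (0 : IncidenceAlgebra 𝕜 α) := fun h0 => by
  simpa [single_apply] using congr($h0 a b)

variable [Semiring 𝕜] [PartialOrder α] [LocallyFiniteOrder α]

lemma single_self_mul_apply (a : α) (f : IncidenceAlgebra 𝕜 α) (x y : α) :
    (single a a le_rfl * f : IncidenceAlgebra 𝕜 α) x y = if x = a then f x y else 0 := by
  by_cases hxy : x ≤ y
  · rcases eq_or_ne x a with rfl | hx <;> simp [single_apply, *]
  · simp [apply_eq_zero_of_not_le hxy]

lemma mul_single_self_apply (a : α) (f : IncidenceAlgebra 𝕜 α) (x y : α) :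
    (f * single a a le_rfl : IncidenceAlgebra 𝕜 α) x y = if y = a then f x y else 0 := by
  by_cases hxy : x ≤ y
  · rcases eq_or_ne y a with rfl | hy <;> simp [single_apply, *]
  · simp [apply_eq_zero_of_not_le hxy]

lemma single_self_mul_mul_single_self_apply (a b : α) (f : IncidenceAlgebra 𝕜 α) (x y : α) :
    (single a a le_rfl * f * single b b le_rfl : IncidenceAlgebra 𝕜 α) x y =
      if x = a ∧ y = b then f a b else 0 := by
  rw [mul_single_self_apply, single_self_mul_apply]
  aesop

lemma single_self_mul_mul_single_self (a : α) (f : IncidenceAlgebra 𝕜 α) :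
    (single a a le_rfl * f * single a a le_rfl : IncidenceAlgebra 𝕜 α) =
      f a a • single a a le_rfl := by
  ext x y
  rw [single_self_mul_mul_single_self_apply, constSMul_apply, single_apply]
  aesop

lemma single_self_mul_single_mul_single_self {a b : α} (h : a ≤ b) :
    (single a a le_rfl * single a b h * single b b le_rfl : IncidenceAlgebra 𝕜 α) =
      single a b h := by
  ext x y
  rw [single_self_mul_mul_single_self_apply, single_apply]
  aesop

lemma isIdempotentElem_single_self (a : α) :
    IsIdempotentElem (single a a le_rfl : IncidenceAlgebra 𝕜 α) := by
  simpa [IsIdempotentElem] using single_self_mul_mul_single_self a (1 : IncidenceAlgebra 𝕜 α)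

end Single

section Diagonal

variable [PartialOrder α] [LocallyFiniteOrder α] [DecidableEq α]

lemma pow_apply_eq_zero_of_forall_apply_self_eq_zero [Semiring 𝕜] {f : IncidenceAlgebra 𝕜 α}
    (hf : ∀ x, f x x = 0) (n : ℕ) {a b : α} (hn : #(Icc a b) ≤ n) : (f ^ n) a b = 0 := by
  induction n generalizing a with
  | zero => exact apply_eq_zero_of_not_le (fun hab => by simp_all) _
  | succ n ih =>
    rw [pow_succ', mul_apply]
    refine sum_eq_zero fun z hz => ?_
    obtain rfl | haz := eq_or_ne a z
    · rw [hf, zero_mul]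
    obtain ⟨haz', hzb⟩ := mem_Icc.1 hz
    have : #(Icc z b) < #(Icc a b) :=
      card_lt_card (Icc_ssubset_Icc_left (haz'.trans hzb) (haz'.lt_of_ne haz) le_rfl)
    rw [ih (by omega), mul_zero]

lemma exists_apply_self_ne_zero_of_isIdempotentElem [Semiring 𝕜] {q : IncidenceAlgebra 𝕜 α}
    (hq : IsIdempotentElem q) (hq0 : q ≠ 0) : ∃ x, q x x ≠ 0 := by
  by_contra! hdiag
  refine hq0 (ext fun a b _ => ?_)
  rw [← hq.pow_succ_eq #(Icc a b),
    pow_apply_eq_zero_of_forall_apply_self_eq_zero hdiag _ (by omega), zero_apply]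

variable (𝕜) in
def diagHom [CommSemiring 𝕜] (x : α) : IncidenceAlgebra 𝕜 α →ₐ[𝕜] 𝕜 where
  toFun f := f x x
  map_one' := by simp
  map_mul' f g := by simp
  map_zero' := rfl
  map_add' _ _ := rfl
  commutes' c := by simp [Algebra.algebraMap_eq_smul_one]

@[simp]
lemma diagHom_apply [CommSemiring 𝕜] (x : α) (f : IncidenceAlgebra 𝕜 α) :
    diagHom 𝕜 x f = f x x := rfl

end Diagonal

section Reindex

variable {β : Type*}

def reindex [Zero 𝕜] [LE α] [LE β] (σ : α ≃o β) (f : IncidenceAlgebra 𝕜 α) :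
    IncidenceAlgebra 𝕜 β :=
  ⟨fun x y => f (σ.symm x) (σ.symm y), fun _ _ h => apply_eq_zero_of_not_le (by simpa using h) f⟩

@[simp]
lemma reindex_apply [Zero 𝕜] [LE α] [LE β] (σ : α ≃o β) (f : IncidenceAlgebra 𝕜 α) (x y : β) :
    reindex σ f x y = f (σ.symm x) (σ.symm y) := rfl

variable [CommSemiring 𝕜] [PartialOrder α] [LocallyFiniteOrder α] [DecidableEq α]
  [PartialOrder β] [LocallyFiniteOrder β] [DecidableEq β]

def reindexAlgEquiv (σ : α ≃o β) : IncidenceAlgebra 𝕜 α ≃ₐ[𝕜] IncidenceAlgebra 𝕜 β where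
  toFun := reindex σ
  invFun := reindex σ.symm
  left_inv f := by ext; simp
  right_inv f := by ext; simp
  map_mul' f g := by
    ext x y
    simp only [reindex_apply, mul_apply]
    refine sum_equiv σ.toEquiv (fun z => ?_) fun z _ => by simp
    simp [← σ.le_symm_apply, ← σ.symm_apply_le]
  map_add' _ _ := rfl
  commutes' c := by ext; simp [Algebra.algebraMap_eq_smul_one]

@[simp]
lemma reindexAlgEquiv_symm_apply (σ : α ≃o β) (f : IncidenceAlgebra 𝕜 β) (x y : α) :
    (reindexAlgEquiv σ).symm f x y = f (σ x) (σ y) := rfl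

end Reindex

section Automorphism

variable [CommSemiring 𝕜] [IsDomain 𝕜] [PartialOrder α] [LocallyFiniteOrder α] [DecidableEq α]

lemma eq_diagHom_of_map_single_self_ne_zero (χ : IncidenceAlgebra 𝕜 α →ₐ[𝕜] 𝕜) {x : α}
    (hχ : χ (single x x le_rfl) ≠ 0) : χ = diagHom 𝕜 x := by
  have h1 : χ (single x x le_rfl) = 1 :=
    (IsIdempotentElem.iff_eq_zero_or_one.1 ((isIdempotentElem_single_self x).map χ)).resolve_left hχ
  ext f
  calc χ f = χ (single x x le_rfl * f * single x x le_rfl) := by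
        rw [map_mul, map_mul, h1, one_mul, mul_one]
    _ = f x x := by rw [single_self_mul_mul_single_self, map_smul, h1, smul_eq_mul, mul_one]

lemma diagHom_injective :
    Function.Injective (diagHom 𝕜 : α → IncidenceAlgebra 𝕜 α →ₐ[𝕜] 𝕜) := by
  intro x y h
  by_contra hxy
  simpa [single_apply, Ne.symm hxy] using congr($h (single x x le_rfl))

lemma exists_diagHom_comp_eq (φ : IncidenceAlgebra 𝕜 α ≃ₐ[𝕜] IncidenceAlgebra 𝕜 α) (x : α) :
    ∃ z, (diagHom 𝕜 z).comp (φ : IncidenceAlgebra 𝕜 α →ₐ[𝕜] IncidenceAlgebra 𝕜 α) =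
      diagHom 𝕜 x := by
  obtain ⟨z, hz⟩ := exists_apply_self_ne_zero_of_isIdempotentElem
    ((isIdempotentElem_single_self x).map φ)
    ((map_ne_zero_iff φ φ.injective).2 (single_ne_zero le_rfl))
  exact ⟨z, eq_diagHom_of_map_single_self_ne_zero _ hz⟩

variable (φ : IncidenceAlgebra 𝕜 α ≃ₐ[𝕜] IncidenceAlgebra 𝕜 α)

noncomputable def pointMap (x : α) : α := (exists_diagHom_comp_eq φ x).choose

lemma apply_pointMap (f : IncidenceAlgebra 𝕜 α) (x : α) :
    φ f (pointMap φ x) (pointMap φ x) = f x x :=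
  congr($((exists_diagHom_comp_eq φ x).choose_spec) f)

lemma pointMap_symm_pointMap (x : α) : pointMap φ.symm (pointMap φ x) = x :=
  diagHom_injective (𝕜 := 𝕜) <| AlgHom.ext fun f => by
    simpa using (apply_pointMap φ.symm (φ f) (pointMap φ x)).trans (apply_pointMap φ f x)

lemma map_single_apply_pointMap_ne_zero {x y : α} (hxy : x ≤ y) :
    φ (single x y hxy) (pointMap φ x) (pointMap φ y) ≠ 0 := by
  intro h0
  set s := pointMap φ x
  set t := pointMap φ y
  have hcorner : single s s le_rfl * φ (single x y hxy) * single t t le_rfl = 0 := by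
    ext a b
    rw [single_self_mul_mul_single_self_apply, h0, ite_self, zero_apply]
  set p := φ.symm (single s s le_rfl)
  set p' := φ.symm (single t t le_rfl)
  have hp : p x x = 1 := by rw [← apply_pointMap φ p x]; simp [p, s, single_apply]
  have hp' : p' y y = 1 := by rw [← apply_pointMap φ p' y]; simp [p', t, single_apply]
  have hpull : p * single x y hxy * p' = 0 := by simpa [p, p'] using congr(φ.symm $hcorner)
  apply single_ne_zero (𝕜 := 𝕜) hxy
  calc single x y hxy
      = single x x le_rfl * p * single x x le_rfl * single x y hxy *
          (single y y le_rfl * p' * single y y le_rfl) := by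
        rw [single_self_mul_mul_single_self, single_self_mul_mul_single_self, hp, hp', one_smul,
          one_smul, single_self_mul_single_mul_single_self]
    _ = single x x le_rfl * (p * (single x x le_rfl * single x y hxy * single y y le_rfl) * p') *
          single y y le_rfl := by simp only [mul_assoc]
    _ = 0 := by rw [single_self_mul_single_mul_single_self, hpull, mul_zero, zero_mul]

lemma pointMap_le_pointMap {x y : α} (hxy : x ≤ y) : pointMap φ x ≤ pointMap φ y :=
  le_of_ne_zero (map_single_apply_pointMap_ne_zero φ hxy)

noncomputable def pointOrderIso : α ≃o α where
  toFun := pointMap φ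
  invFun := pointMap φ.symm
  left_inv := pointMap_symm_pointMap φ
  right_inv x := by simpa using pointMap_symm_pointMap φ.symm x
  map_rel_iff' {x y} := ⟨fun h => by
    simpa only [pointMap_symm_pointMap] using
      pointMap_le_pointMap φ.symm (show pointMap φ x ≤ pointMap φ y from h),
    pointMap_le_pointMap φ⟩

lemma coe_pointOrderIso : ⇑(pointOrderIso φ) = pointMap φ := rfl

end Automorphism

end IncidenceAlgebra

lemma inv_mul_eq_inv_mul_iff_mul_inv_eq_mul_inv {G : Type*} [Group G] {a b c d : G} :
    a⁻¹ * b = c⁻¹ * d ↔ a * c⁻¹ = b * d⁻¹ := by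
  rw [inv_mul_eq_iff_eq_mul, ← mul_assoc, ← mul_inv_eq_iff_eq_mul, eq_comm]

lemma Relation.EqvGen.apply_eq_of_forall_le {α β : Type*} [Preorder α] {f : α → β}
    (hf : ∀ x y, x ≤ y → f x = f y) {x y : α} (h : EqvGen (fun a b : α => a ≤ b ∨ b ≤ a) x y) :
    f x = f y :=
  (Setoid.ker f).iseqv.eqvGen_iff.1 <|
    h.mono (fun a b hab => hab.elim (hf a b) fun hba => (hf b a hba).symm) x y

section Grading

open IncidenceAlgebra

variable {F α G : Type*} [Field F] [PartialOrder α] [LocallyFiniteOrder α] [Group G]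

lemma mem_elemSubspace {θ : α → G} {g : G} {f : IncidenceAlgebra F α} :
    f ∈ elemSubspace F θ g ↔ ∀ x y, x ≤ y → (θ x)⁻¹ * θ y ≠ g → f x y = 0 :=
  Iff.rfl

lemma elemSubspace_congr {θ μ : α → G} (h : ∀ x y, x ≤ y → (θ x)⁻¹ * θ y = (μ x)⁻¹ * μ y)
    (g : G) : elemSubspace F θ g = elemSubspace F μ g := by
  ext f
  simp only [mem_elemSubspace]
  exact forall₃_congr fun x y hxy => by rw [h x y hxy]

variable [DecidableEq α]

lemma single_mem_elemSubspace (θ : α → G) {x y : α} (hxy : x ≤ y) :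
    single x y hxy ∈ elemSubspace F θ ((θ x)⁻¹ * θ y) := by
  intro a b _ hg
  rw [single_apply, if_neg]
  rintro ⟨rfl, rfl⟩
  exact hg rfl

lemma map_elemSubspace_reindexAlgEquiv {β : Type*} [PartialOrder β] [LocallyFiniteOrder β]
    [DecidableEq β] (σ : α ≃o β) (θ : α → G) (g : G) :
    (elemSubspace F θ g).map (reindexAlgEquiv σ).toLinearMap =
      elemSubspace F (θ ∘ σ.symm) g := by
  ext f
  rw [← AlgEquiv.toLinearEquiv_toLinearMap, Submodule.mem_map_equiv, mem_elemSubspace,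
    mem_elemSubspace, σ.toEquiv.forall_congr_left]
  refine forall_congr' fun x => σ.toEquiv.forall_congr_left.trans (forall_congr' fun y => ?_)
  simp

lemma pointMap_inv_mul_eq_of_map_elemSubspace_le {θ μ : α → G}
    {φ : IncidenceAlgebra F α ≃ₐ[F] IncidenceAlgebra F α}
    (hφ : ∀ g, (elemSubspace F θ g).map φ.toLinearMap ≤ elemSubspace F μ g) {x y : α}
    (hxy : x ≤ y) : (μ (pointMap φ x))⁻¹ * μ (pointMap φ y) = (θ x)⁻¹ * θ y := by
  have hmem := hφ _ (Submodule.mem_map_of_mem (single_mem_elemSubspace (F := F) θ hxy))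
  by_contra hne
  exact map_single_apply_pointMap_ne_zero φ hxy (hmem _ _ (pointMap_le_pointMap φ hxy) hne)

end Grading

theorem gradedIso_iff_general {F α G : Type*} [Field F] [PartialOrder α] [LocallyFiniteOrder α]
    [DecidableEq α] [Group G] (θ μ : α → G) :
    (∃ φ : IncidenceAlgebra F α ≃ₐ[F] IncidenceAlgebra F α,
        ∀ g : G, (elemSubspace F θ g).map φ.toLinearMap = elemSubspace F μ g) ↔
      ∃ σ : α ≃o α, ∀ x y : α, Relation.EqvGen (fun a b : α => a ≤ b ∨ b ≤ a) x y →
        μ x * (θ (σ.symm x))⁻¹ = μ y * (θ (σ.symm y))⁻¹ := by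
  constructor
  · rintro ⟨φ, hφ⟩
    set σ := IncidenceAlgebra.pointOrderIso φ
    refine ⟨σ, fun x y h => h.apply_eq_of_forall_le (f := fun z => μ z * (θ (σ.symm z))⁻¹)
      fun x y hxy => ?_⟩
    have hgrade :=
      pointMap_inv_mul_eq_of_map_elemSubspace_le (fun g => (hφ g).le) (σ.symm.monotone hxy)
    rw [← IncidenceAlgebra.coe_pointOrderIso, σ.apply_symm_apply, σ.apply_symm_apply] at hgrade
    exact inv_mul_eq_inv_mul_iff_mul_inv_eq_mul_inv.1 hgrade
  · rintro ⟨σ, hσ⟩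
    refine ⟨IncidenceAlgebra.reindexAlgEquiv σ, fun g => ?_⟩
    rw [map_elemSubspace_reindexAlgEquiv]
    refine elemSubspace_congr (fun x y hxy => ?_) g
    exact (inv_mul_eq_inv_mul_iff_mul_inv_eq_mul_inv.2 (hσ x y (.rel x y (.inl hxy)))).symm

/-- for `θ, μ : P → G` with `G_θ` and `G_μ` finite, the elementary graded
algebras `A^θ` and `A^μ` are isomorphic as `G`-graded algebras (there is an algebra
automorphism of `I(P,F)` carrying `A^θ(g)` onto `A^μ(g)` for all `g`) if and only if there
is an order automorphism `σ` of `P` such that `x ↦ μ(x) * θ(σ⁻¹ x)⁻¹` is constant on each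
connected component of `P`. -/
theorem gradedIso_iff {F α G : Type*} [Field F] [PartialOrder α] [LocallyFiniteOrder α]
    [DecidableEq α] [Group G] (θ μ : α → G)
    (hθ : {g : G | ∃ x y : α, x ≤ y ∧ (θ x)⁻¹ * θ y = g}.Finite)
    (hμ : {g : G | ∃ x y : α, x ≤ y ∧ (μ x)⁻¹ * μ y = g}.Finite) :
    (∃ φ : IncidenceAlgebra F α ≃ₐ[F] IncidenceAlgebra F α,
        ∀ g : G, (elemSubspace F θ g).map φ.toLinearMap = elemSubspace F μ g) ↔
      ∃ σ : α ≃o α, ∀ x y : α, Relation.EqvGen (fun a b : α => a ≤ b ∨ b ≤ a) x y →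
        μ x * (θ (σ.symm x))⁻¹ = μ y * (θ (σ.symm y))⁻¹ :=
  gradedIso_iff_general θ μ
end
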